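/- Assume f : 𝒳ⁿ × ℝᵐ → ℝⁿ is Lipschitz on bounded sets with f(0,0) = 0, and let V : 𝒳ⁿ → [0,∞) be locally Lipschitz. Let x₀ ∈ 𝒳ⁿ, let u be an input, and let x be the maximal solution of ẋ(t) = f(x_t, u(t)) on [0, t_max). Define ν : [0, t_max) → [0,∞) by ν(t) := V(x_t) and its upper right Dini derivative 𝒟⁺ν(t) := limsup_{h→0⁺} (ν(t+h) − ν(t))/h. Then for almost every t ∈ [0, t_max), 𝒟⁺ν(t) = D⁺V(x_t, f(x_t, u(t))). -/

import Mathlib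

open Set Filter MeasureTheory Topology
open scoped NNReal

noncomputable section

/-- `ℝⁿ` with the Euclidean norm. -/
abbrev Vec (n : ℕ) : Type := EuclideanSpace ℝ (Fin n)

/-- The state space `𝒳ⁿ = C([-Δ,0], ℝⁿ)`, equipped with the sup norm. -/
abbrev Hist (Δ : ℝ≥0) (n : ℕ) : Type :=
  ContinuousMap (Icc (-(Δ : ℝ)) (0 : ℝ)) (Vec n)

theorem zero_mem_IccD (Δ : ℝ≥0) : (0 : ℝ) ∈ Icc (-(Δ : ℝ)) (0 : ℝ) :=
  ⟨neg_nonpos.mpr Δ.coe_nonneg, le_refl 0⟩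

/-- `φ(0)`: the current value of a history segment. -/
def ev0 {Δ : ℝ≥0} {n : ℕ} (φ : Hist Δ n) : Vec n :=
  φ ⟨0, zero_mem_IccD Δ⟩

/-! ### Comparison functions -/

/-- Class `𝒦`: continuous, strictly increasing, zero at zero (on `[0,∞)`). -/
def ClassK (α : ℝ → ℝ) : Prop :=
  ContinuousOn α (Ici 0) ∧ StrictMonoOn α (Ici 0) ∧ α 0 = 0

/-- Class `𝒦∞`: class `𝒦` and unbounded. -/
def ClassKinf (α : ℝ → ℝ) : Prop :=
  ClassK α ∧ Tendsto α atTop atTop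

/-- Class `𝒩`: continuous, nondecreasing, zero at zero (on `[0,∞)`). -/
def ClassN (α : ℝ → ℝ) : Prop :=
  ContinuousOn α (Ici 0) ∧ MonotoneOn α (Ici 0) ∧ α 0 = 0

/-- Class `𝒫`: continuous, zero at zero, positive on `(0,∞)`. -/
def ClassP (α : ℝ → ℝ) : Prop :=
  ContinuousOn α (Ici 0) ∧ α 0 = 0 ∧ ∀ s : ℝ, 0 < s → 0 < α s

/-- Class `𝒦ℒ`. -/
def ClassKL (β : ℝ → ℝ → ℝ) : Prop :=
  (∀ t : ℝ, 0 ≤ t → ClassK fun s => β s t) ∧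
    ∀ s : ℝ, 0 ≤ s →
      ContinuousOn (β s) (Ici 0) ∧ AntitoneOn (β s) (Ici 0) ∧
        Tendsto (β s) atTop (𝓝 0)

/-! ### Inputs -/

/-- Admissible input: Lebesgue measurable and locally essentially bounded. -/
def IsInput {m : ℕ} (u : ℝ → Vec m) : Prop :=
  Measurable u ∧ ∀ T : ℝ, 0 < T → ∃ C : ℝ, ∀ᵐ t ∂volume, t ∈ Icc (0 : ℝ) T → ‖u t‖ ≤ C

/-- Essential supremum of `‖u‖` over a set of times. -/
def essBnd {m : ℕ} (u : ℝ → Vec m) (s : Set ℝ) : ℝ :=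
  sInf {C : ℝ | 0 ≤ C ∧ ∀ᵐ τ ∂volume, τ ∈ s → ‖u τ‖ ≤ C}

/-! ### History segments along a trajectory -/

-- The history segment `x_t ∈ 𝒳ⁿ` of a trajectory `x : ℝ → ℝⁿ` (with junk value `0`
-- when `x` is not continuous on `[t-Δ, t]`).
open Classical in
def seg (Δ : ℝ≥0) {n : ℕ} (x : ℝ → Vec n) (t : ℝ) : Hist Δ n :=
  if hx : ContinuousOn x (Icc (t - (Δ : ℝ)) t) then
    { toFun := fun τ => x (t + τ.1)
      continuous_toFun := by
        have h1 : Continuous fun τ : Icc (-(Δ : ℝ)) (0 : ℝ) => t + τ.1 :=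
          continuous_const.add continuous_subtype_val
        have h2 : ∀ τ : Icc (-(Δ : ℝ)) (0 : ℝ), t + τ.1 ∈ Icc (t - (Δ : ℝ)) t := by
          rintro ⟨τ, hτ⟩
          rw [mem_Icc] at hτ ⊢
          constructor
          · linarith [hτ.1]
          · linarith [hτ.2]
        exact hx.comp_continuous h1 h2 }
  else 0

/-! ### Driver's derivative and Dini derivative -/

/-- The deformed history `φ_{h,w}` appearing in Driver's derivative: for `0 ≤ h < Δ`,
`φ_{h,w}(s) = φ(s+h)` for `s ∈ [-Δ,-h)` and `φ_{h,w}(s) = φ(0) + w(h+s)` for `s ∈ [-h,0]`. -/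
def shiftSeg {Δ : ℝ≥0} {n : ℕ} (φ : Hist Δ n) (w : Vec n) (h : ℝ) : Hist Δ n :=
  { toFun := fun s =>
      φ (projIcc (-(Δ : ℝ)) 0 (neg_nonpos.mpr Δ.coe_nonneg) (s.1 + h)) + max (h + s.1) 0 • w
    continuous_toFun := by
      refine Continuous.add ?_ ?_
      · exact φ.continuous.comp (continuous_projIcc.comp
          (continuous_subtype_val.add continuous_const))
      · exact ((continuous_const.add continuous_subtype_val).max continuous_const).smul
          continuous_const }

/-- Driver's derivative `D⁺V(φ,w)`, valued in the extended reals. -/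
def driverD {Δ : ℝ≥0} {n : ℕ} (V : Hist Δ n → ℝ) (φ : Hist Δ n) (w : Vec n) : EReal :=
  limsup (fun h : ℝ => (((V (shiftSeg φ w h) - V φ) / h : ℝ) : EReal)) (𝓝[>] (0 : ℝ))

/-- Upper right-hand Dini derivative of `ν : ℝ → ℝ`, valued in the extended reals. -/
def diniD (ν : ℝ → ℝ) (t : ℝ) : EReal :=
  limsup (fun h : ℝ => (((ν (t + h) - ν t) / h : ℝ) : EReal)) (𝓝[>] (0 : ℝ))

/-! ### Lipschitz conditions -/

/-- `f : 𝒳ⁿ × ℝᵐ → ℝⁿ` is Lipschitz on bounded sets. -/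
def LipOnBounded {Δ : ℝ≥0} {n m : ℕ} (f : Hist Δ n → Vec m → Vec n) : Prop :=
  ∀ r : ℝ, 0 < r → ∃ L : ℝ, 0 < L ∧
    ∀ (φ₁ φ₂ : Hist Δ n) (v₁ v₂ : Vec m),
      ‖φ₁‖ ≤ r → ‖φ₂‖ ≤ r → ‖v₁‖ ≤ r → ‖v₂‖ ≤ r →
        ‖f φ₁ v₁ - f φ₂ v₂‖ ≤ L * (‖φ₁ - φ₂‖ + ‖v₁ - v₂‖)

/-- An input-free vector field `f₀ : 𝒳ⁿ → ℝⁿ` Lipschitz on bounded sets. -/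
def LipOnBounded₀ {Δ : ℝ≥0} {n : ℕ} (f₀ : Hist Δ n → Vec n) : Prop :=
  ∀ r : ℝ, 0 < r → ∃ L : ℝ, 0 < L ∧
    ∀ φ₁ φ₂ : Hist Δ n, ‖φ₁‖ ≤ r → ‖φ₂‖ ≤ r → ‖f₀ φ₁ - f₀ φ₂‖ ≤ L * ‖φ₁ - φ₂‖

/-- A functional `V : 𝒳ⁿ → ℝ` Lipschitz on bounded sets. -/
def LipOnBoundedV {Δ : ℝ≥0} {n : ℕ} (V : Hist Δ n → ℝ) : Prop :=
  ∀ r : ℝ, 0 < r → ∃ L : ℝ, 0 < L ∧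
    ∀ φ₁ φ₂ : Hist Δ n, ‖φ₁‖ ≤ r → ‖φ₂‖ ≤ r → |V φ₁ - V φ₂| ≤ L * ‖φ₁ - φ₂‖

/-- A functional `V : 𝒳ⁿ → ℝ` locally Lipschitz. -/
def LocallyLipV {Δ : ℝ≥0} {n : ℕ} (V : Hist Δ n → ℝ) : Prop :=
  ∀ φ : Hist Δ n, ∃ δ : ℝ, 0 < δ ∧ ∃ L : ℝ, 0 < L ∧
    ∀ φ₁ φ₂ : Hist Δ n, ‖φ₁ - φ‖ ≤ δ → ‖φ₂ - φ‖ ≤ δ → |V φ₁ - V φ₂| ≤ L * ‖φ₁ - φ₂‖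

/-! ### Solutions -/

/-- `x` is a solution of `ẋ(t) = f(x_t, u(t))` with initial state `x₀` on `[0, tmax)`. -/
structure IsSolution (Δ : ℝ≥0) {n m : ℕ} (f : Hist Δ n → Vec m → Vec n)
    (u : ℝ → Vec m) (x₀ : Hist Δ n) (tmax : EReal) (x : ℝ → Vec n) : Prop where
  tmax_pos : 0 < tmax
  cont : ContinuousOn x {s : ℝ | -(Δ : ℝ) ≤ s ∧ (s : EReal) < tmax}
  init : ∀ τ : Icc (-(Δ : ℝ)) (0 : ℝ), x τ.1 = x₀ τ
  integrable : ∀ t : ℝ, 0 ≤ t → (t : EReal) < tmax →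
    IntervalIntegrable (fun s => f (seg Δ x s) (u s)) volume 0 t
  integral_eq : ∀ t : ℝ, 0 ≤ t → (t : EReal) < tmax →
    x t = x 0 + ∫ s in (0:ℝ)..t, f (seg Δ x s) (u s)

/-- Maximal solution: a solution admitting no proper extension. -/
def IsMaxSolution (Δ : ℝ≥0) {n m : ℕ} (f : Hist Δ n → Vec m → Vec n)
    (u : ℝ → Vec m) (x₀ : Hist Δ n) (tmax : EReal) (x : ℝ → Vec n) : Prop :=
  IsSolution Δ f u x₀ tmax x ∧
    ∀ (tmax' : EReal) (x' : ℝ → Vec n), IsSolution Δ f u x₀ tmax' x' →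
      (∀ t : ℝ, -(Δ : ℝ) ≤ t → (t : EReal) < tmax → x' t = x t) → tmax' ≤ tmax

/-- Solution of the input-free system `ẋ(t) = f₀(x_t)`. -/
def IsSolution₀ (Δ : ℝ≥0) {n : ℕ} (f₀ : Hist Δ n → Vec n) (x₀ : Hist Δ n)
    (tmax : EReal) (x : ℝ → Vec n) : Prop :=
  IsSolution Δ (fun φ (_ : Vec 0) => f₀ φ) (fun _ => 0) x₀ tmax x

/-- Maximal solution of the input-free system `ẋ(t) = f₀(x_t)`. -/
def IsMaxSolution₀ (Δ : ℝ≥0) {n : ℕ} (f₀ : Hist Δ n → Vec n) (x₀ : Hist Δ n)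
    (tmax : EReal) (x : ℝ → Vec n) : Prop :=
  IsMaxSolution Δ (fun φ (_ : Vec 0) => f₀ φ) (fun _ => 0) x₀ tmax x

/-! ### Stability properties (input-free systems) -/

/-- Global asymptotic stability (GAS). -/
def GAS (Δ : ℝ≥0) {n : ℕ} (f₀ : Hist Δ n → Vec n) : Prop :=
  ∃ β : ℝ → ℝ → ℝ, ClassKL β ∧
    ∀ (x₀ : Hist Δ n) (tmax : EReal) (x : ℝ → Vec n),
      IsMaxSolution₀ Δ f₀ x₀ tmax x →
        tmax = ⊤ ∧ ∀ t : ℝ, 0 ≤ t → ‖x t‖ ≤ β ‖x₀‖ t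

/-- Global exponential stability (GES). -/
def GES (Δ : ℝ≥0) {n : ℕ} (f₀ : Hist Δ n → Vec n) : Prop :=
  ∃ k : ℝ, 1 ≤ k ∧ ∃ lam : ℝ, 0 < lam ∧
    ∀ (x₀ : Hist Δ n) (tmax : EReal) (x : ℝ → Vec n),
      IsMaxSolution₀ Δ f₀ x₀ tmax x →
        tmax = ⊤ ∧ ∀ t : ℝ, 0 ≤ t → ‖x t‖ ≤ k * ‖x₀‖ * Real.exp (-lam * t)

/-- (Local) asymptotic stability (AS) of the origin. -/
def AS (Δ : ℝ≥0) {n : ℕ} (f₀ : Hist Δ n → Vec n) : Prop :=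
  ∃ r : ℝ, 0 < r ∧ ∃ β : ℝ → ℝ → ℝ, ClassKL β ∧
    ∀ (x₀ : Hist Δ n) (tmax : EReal) (x : ℝ → Vec n),
      IsMaxSolution₀ Δ f₀ x₀ tmax x → ‖x₀‖ ≤ r →
        tmax = ⊤ ∧ ∀ t : ℝ, 0 ≤ t → ‖x t‖ ≤ β ‖x₀‖ t

/-- (Local) exponential stability (ES) of the origin. -/
def ES (Δ : ℝ≥0) {n : ℕ} (f₀ : Hist Δ n → Vec n) : Prop :=
  ∃ r : ℝ, 0 < r ∧ ∃ k : ℝ, 1 ≤ k ∧ ∃ lam : ℝ, 0 < lam ∧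
    ∀ (x₀ : Hist Δ n) (tmax : EReal) (x : ℝ → Vec n),
      IsMaxSolution₀ Δ f₀ x₀ tmax x → ‖x₀‖ ≤ r →
        tmax = ⊤ ∧ ∀ t : ℝ, 0 ≤ t → ‖x t‖ ≤ k * ‖x₀‖ * Real.exp (-lam * t)

/-! ### Forward completeness -/

/-- Robust forward completeness (RFC) of `ẋ(t) = f(x_t,u(t))`. -/
def RFC (Δ : ℝ≥0) {n m : ℕ} (f : Hist Δ n → Vec m → Vec n) : Prop :=
  (∀ (x₀ : Hist Δ n) (u : ℝ → Vec m) (tmax : EReal) (x : ℝ → Vec n),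
      IsInput u → IsMaxSolution Δ f u x₀ tmax x → tmax = ⊤) ∧
    ∀ T : ℝ, 0 < T → ∀ r : ℝ, 0 < r → ∃ C : ℝ,
      ∀ (x₀ : Hist Δ n) (u : ℝ → Vec m) (tmax : EReal) (x : ℝ → Vec n),
        IsInput u → IsMaxSolution Δ f u x₀ tmax x →
          ‖x₀‖ ≤ r → essBnd u (Ici 0) ≤ r →
            ∀ t : ℝ, t ∈ Icc (0 : ℝ) T → ‖seg Δ x t‖ ≤ C

/-- Robust forward completeness of the input-free system `ẋ(t) = f₀(x_t)`. -/
def RFC₀ (Δ : ℝ≥0) {n : ℕ} (f₀ : Hist Δ n → Vec n) : Prop :=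
  RFC Δ (fun φ (_ : Vec 0) => f₀ φ)

/-! ### Input-to-state stability notions -/

/-- Input-to-state stability (ISS). -/
def ISS (Δ : ℝ≥0) {n m : ℕ} (f : Hist Δ n → Vec m → Vec n) : Prop :=
  ∃ β : ℝ → ℝ → ℝ, ∃ μ : ℝ → ℝ, ClassKL β ∧ ClassN μ ∧
    ∀ (x₀ : Hist Δ n) (u : ℝ → Vec m) (tmax : EReal) (x : ℝ → Vec n),
      IsInput u → IsMaxSolution Δ f u x₀ tmax x →
        tmax = ⊤ ∧ ∀ t : ℝ, 0 ≤ t → ‖x t‖ ≤ β ‖x₀‖ t + μ (essBnd u (Icc 0 t))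

/-- Local input-to-state stability (LISS). -/
def LISS (Δ : ℝ≥0) {n m : ℕ} (f : Hist Δ n → Vec m → Vec n) : Prop :=
  ∃ r : ℝ, 0 < r ∧ ∃ β : ℝ → ℝ → ℝ, ∃ μ : ℝ → ℝ, ClassKL β ∧ ClassN μ ∧
    ∀ (x₀ : Hist Δ n) (u : ℝ → Vec m) (tmax : EReal) (x : ℝ → Vec n),
      IsInput u → IsMaxSolution Δ f u x₀ tmax x →
        ‖x₀‖ ≤ r → essBnd u (Ici 0) ≤ r →
          tmax = ⊤ ∧ ∀ t : ℝ, 0 ≤ t → ‖x t‖ ≤ β ‖x₀‖ t + μ (essBnd u (Icc 0 t))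

/-- Integral input-to-state stability (iISS). -/
def iISS (Δ : ℝ≥0) {n m : ℕ} (f : Hist Δ n → Vec m → Vec n) : Prop :=
  ∃ β : ℝ → ℝ → ℝ, ∃ η μ : ℝ → ℝ, ClassKL β ∧ ClassN η ∧ ClassN μ ∧
    ∀ (x₀ : Hist Δ n) (u : ℝ → Vec m) (tmax : EReal) (x : ℝ → Vec n),
      IsInput u → IsMaxSolution Δ f u x₀ tmax x →
        tmax = ⊤ ∧ ∀ t : ℝ, 0 ≤ t →
          ‖x t‖ ≤ β ‖x₀‖ t + η (∫ s in (0:ℝ)..t, μ ‖u s‖)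

/-- The UBEBS estimate with offset `c`. -/
def UBEBSwith (Δ : ℝ≥0) {n m : ℕ} (f : Hist Δ n → Vec m → Vec n) (c : ℝ) : Prop :=
  ∃ α ξ ζ : ℝ → ℝ, ClassKinf α ∧ ClassKinf ξ ∧ ClassKinf ζ ∧
    ∀ (x₀ : Hist Δ n) (u : ℝ → Vec m) (tmax : EReal) (x : ℝ → Vec n),
      IsInput u → IsMaxSolution Δ f u x₀ tmax x →
        tmax = ⊤ ∧ ∀ t : ℝ, 0 ≤ t →
          α ‖x t‖ ≤ ξ ‖x₀‖ + (∫ s in (0:ℝ)..t, ζ ‖u s‖) + c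

/-! ### Lyapunov–Krasovskii functionals -/

/-- Lyapunov–Krasovskii functional candidate (LKF). -/
def IsLKF {Δ : ℝ≥0} {n : ℕ} (V : Hist Δ n → ℝ) : Prop :=
  (∀ φ, 0 ≤ V φ) ∧ LipOnBoundedV V ∧
    ∃ α₁ α₂ : ℝ → ℝ, ClassKinf α₁ ∧ ClassKinf α₂ ∧
      ∀ φ : Hist Δ n, α₁ ‖ev0 φ‖ ≤ V φ ∧ V φ ≤ α₂ ‖φ‖

/-- Coercive Lyapunov–Krasovskii functional candidate. -/
def IsCoerciveLKF {Δ : ℝ≥0} {n : ℕ} (V : Hist Δ n → ℝ) : Prop :=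
  (∀ φ, 0 ≤ V φ) ∧ LipOnBoundedV V ∧
    ∃ α₁ α₂ : ℝ → ℝ, ClassKinf α₁ ∧ ClassKinf α₂ ∧
      ∀ φ : Hist Δ n, α₁ ‖φ‖ ≤ V φ ∧ V φ ≤ α₂ ‖φ‖

end

/-! At a Lebesgue point `t` of `g s = f(x_s, u(s))`, with `w = g t`, the segment `x_{t+h}` differs
from Driver's deformed history `(x_t)_{h,w}` in sup norm by at most
`∫_t^{t+h} |g s - w| ds = o(h)`. Since `V` is locally Lipschitz, the difference quotients of
`ν` and of Driver's derivative then differ by `o(1)`, so their limsups agree. Almost every `t`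
in `[0, t_max)` is such a Lebesgue point: apply Lebesgue's differentiation theorem on `[0, T]`
for countably many `T < t_max`. -/

theorem EReal.limsup_add_of_tendsto_zero {α : Type*} {l : Filter α} [l.NeBot] {u v : α → EReal}
    (hv : Tendsto v l (𝓝 0)) : limsup (u + v) l = limsup u l := by
  refine le_antisymm ?_ ?_
  · simpa [hv.limsup_eq] using
      EReal.limsup_add_le (u := u) (v := v) (f := l) (.inr (by simp [hv.limsup_eq]))
        (.inr (by simp [hv.limsup_eq]))
  · simpa [hv.liminf_eq] using EReal.le_limsup_add (u := u) (v := v) (f := l)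

theorem ae_lt_imp_of_forall_coe_lt {P : ℝ → Prop} {τ : EReal}
    (h : ∀ T : ℝ, (T : EReal) < τ → ∀ᵐ t, t < T → P t) :
    ∀ᵐ t : ℝ, (t : EReal) < τ → P t := by
  have hq : ∀ᵐ t : ℝ, ∀ q : ℚ, ((q : ℝ) : EReal) < τ → t < q → P t := by
    refine ae_all_iff.2 fun q => ?_
    by_cases hqτ : ((q : ℝ) : EReal) < τ
    · filter_upwards [h q hqτ] with t ht _ using ht
    · exact .of_forall fun t h => absurd h hqτ
  filter_upwards [hq] with t ht htτ
  obtain ⟨q, htq, hqτ⟩ := EReal.exists_rat_btwn_of_lt htτ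
  exact ht q hqτ (by exact_mod_cast htq)

section LebesguePoints

variable {E : Type*} [NormedAddCommGroup E]

theorem MeasureTheory.LocallyIntegrable.ae_isLittleO_intervalIntegral_norm_sub {G : ℝ → E}
    (hG : LocallyIntegrable G) :
    ∀ᵐ t, (fun h => ∫ s in t..t + h, ‖G s - G t‖) =o[𝓝[>] 0] id := by
  filter_upwards [(IsUnifLocDoublingMeasure.vitaliFamily volume 1).ae_tendsto_average_norm_sub hG]
    with t ht
  have hshift : Tendsto (t + ·) (𝓝[>] (0 : ℝ)) (𝓝[>] t) := by
    refine tendsto_nhdsWithin_of_tendsto_nhds_of_eventually_within _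
      (((continuous_const_add t).tendsto' 0 t (add_zero t)).mono_left nhdsWithin_le_nhds) ?_
    filter_upwards [self_mem_nhdsWithin] with h hh
    simpa using hh
  have havg := (ht.comp (Real.tendsto_Icc_vitaliFamily_right t)).comp hshift
  refine (Asymptotics.isLittleO_iff_tendsto' ?_).2 (havg.congr' ?_)
  · filter_upwards [self_mem_nhdsWithin] with h hh hh0
    exact absurd hh0 (ne_of_gt hh)
  · filter_upwards [self_mem_nhdsWithin] with h hh
    have hh : 0 < h := hh
    simp [setAverage_eq, integral_Icc_eq_integral_Ioc, intervalIntegral.integral_of_le, hh.le,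
      div_eq_inv_mul]

theorem MeasureTheory.IntegrableOn.ae_isLittleO_intervalIntegral_norm_sub {g : ℝ → E} {a b : ℝ}
    (hg : IntegrableOn g (Icc a b)) :
    ∀ᵐ t, t ∈ Ico a b → (fun h => ∫ s in t..t + h, ‖g s - g t‖) =o[𝓝[>] 0] id := by
  have hG : LocallyIntegrable ((Icc a b).indicator g) :=
    (hg.integrable_indicator measurableSet_Icc).locallyIntegrable
  filter_upwards [hG.ae_isLittleO_intervalIntegral_norm_sub] with t ht ⟨hat, htb⟩
  refine ht.congr' ?_ .rfl
  filter_upwards [Ioc_mem_nhdsGT (sub_pos.2 htb)] with h hh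
  refine intervalIntegral.integral_congr fun s hs => ?_
  rw [uIcc_of_le (by linarith [hh.1])] at hs
  have hsab : s ∈ Icc a b := ⟨by linarith [hs.1], by linarith [hs.2, hh.2]⟩
  simp only [indicator_of_mem hsab, indicator_of_mem (show t ∈ Icc a b from ⟨hat, htb.le⟩)]

end LebesguePoints

section History

variable {Δ : ℝ≥0} {n : ℕ}

theorem seg_apply {x : ℝ → Vec n} {t : ℝ} (hx : ContinuousOn x (Icc (t - Δ) t))
    (τ : Icc (-(Δ : ℝ)) 0) : seg Δ x t τ = x (t + τ) := by
  rw [seg, dif_pos hx]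
  rfl

theorem shiftSeg_apply (φ : Hist Δ n) (w : Vec n) (h : ℝ) (τ : Icc (-(Δ : ℝ)) 0) :
    shiftSeg φ w h τ
      = φ (projIcc (-(Δ : ℝ)) 0 (neg_nonpos.mpr Δ.coe_nonneg) (τ + h)) + max (h + τ) 0 • w :=
  rfl

theorem shiftSeg_zero (φ : Hist Δ n) (w : Vec n) : shiftSeg φ w 0 = φ := by
  ext τ
  rw [shiftSeg_apply, add_zero, projIcc_val, zero_add, max_eq_right τ.2.2, zero_smul, add_zero]

theorem continuous_shiftSeg (φ : Hist Δ n) (w : Vec n) : Continuous (shiftSeg φ w) := by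
  refine ContinuousMap.continuous_of_continuous_uncurry _ ?_
  simp only [Function.uncurry_def, shiftSeg_apply]
  fun_prop

theorem norm_seg_add_sub_shiftSeg_le {x g : ℝ → Vec n} {t h : ℝ} (w : Vec n) (hh : 0 ≤ h)
    (hx : ContinuousOn x (Icc (t - Δ) (t + h))) (hg : IntervalIntegrable g volume t (t + h))
    (hxg : ∀ b ∈ Icc t (t + h), x b - x t = ∫ s in t..b, g s) :
    ‖seg Δ x (t + h) - shiftSeg (seg Δ x t) w h‖ ≤ ∫ s in t..t + h, ‖g s - w‖ := by
  have hE : 0 ≤ ∫ s in t..t + h, ‖g s - w‖ :=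
    intervalIntegral.integral_nonneg (by linarith) fun _ _ => norm_nonneg _
  refine (ContinuousMap.norm_le _ hE).2 fun τ => ?_
  have hxt : ContinuousOn x (Icc (t - Δ) t) := hx.mono (Icc_subset_Icc le_rfl (by linarith))
  have hxth : ContinuousOn x (Icc (t + h - Δ) (t + h)) :=
    hx.mono (Icc_subset_Icc (by linarith) le_rfl)
  rw [ContinuousMap.sub_apply, seg_apply hxth, shiftSeg_apply]
  -- For `τ + h ≤ 0` both histories read `x (t + h + τ)`; otherwise they differ by
  -- `∫_t^{t+h+τ} (g - w)`.
  rcases le_or_gt (τ + h : ℝ) 0 with hτ | hτ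
  · rw [projIcc_of_mem _ ⟨by linarith [τ.2.1], hτ⟩, seg_apply hxt, max_eq_right (by linarith),
      zero_smul, add_zero]
    dsimp only
    rw [show t + h + τ = t + (τ + h) by ring, sub_self, norm_zero]
    exact hE
  · rw [projIcc_of_right_le _ hτ.le, seg_apply hxt, add_zero, max_eq_left (by linarith)]
    set b := t + h + τ
    have hb : b ∈ Icc t (t + h) := ⟨by linarith, by linarith [τ.2.2]⟩
    have hgb : IntervalIntegrable g volume t b :=
      hg.mono_set <| by
        rw [uIcc_of_le hb.1, uIcc_of_le (le_add_of_nonneg_right hh)]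
        exact Icc_subset_Icc le_rfl hb.2
    calc ‖x b - (x t + (h + τ) • w)‖ = ‖∫ s in t..b, (g s - w)‖ := by
          rw [intervalIntegral.integral_sub hgb intervalIntegrable_const, ← hxg b hb,
            intervalIntegral.integral_const, show b - t = h + τ by ring, sub_sub]
      _ ≤ ∫ s in t..b, ‖g s - w‖ := intervalIntegral.norm_integral_le_integral_norm hb.1
      _ ≤ ∫ s in t..t + h, ‖g s - w‖ :=
          intervalIntegral.integral_mono_interval le_rfl hb.1 hb.2
            (.of_forall fun _ => norm_nonneg _) (hg.sub intervalIntegrable_const).norm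

theorem LocallyLipV.isBigO_sub {V : Hist Δ n → ℝ} (hV : LocallyLipV V)
    {α : Type*} {l : Filter α} {a b : α → Hist Δ n} {φ : Hist Δ n}
    (ha : Tendsto a l (𝓝 φ)) (hb : Tendsto b l (𝓝 φ)) :
    (fun i => V (a i) - V (b i)) =O[l] fun i => a i - b i := by
  obtain ⟨δ, hδ, L, -, hL⟩ := hV φ
  refine .of_bound L ?_
  filter_upwards [ha (Metric.closedBall_mem_nhds φ hδ), hb (Metric.closedBall_mem_nhds φ hδ)]
    with i hai hbi
  simp only [mem_preimage, mem_closedBall_iff_norm] at hai hbi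
  exact hL _ _ hai hbi

theorem diniD_eq_driverD_of_isLittleO {V : Hist Δ n → ℝ} (hV : LocallyLipV V)
    {ψ : ℝ → Hist Δ n} {t : ℝ} {w : Vec n}
    (hψ : (fun h => ψ (t + h) - shiftSeg (ψ t) w h) =o[𝓝[>] 0] id) :
    diniD (fun s => V (ψ s)) t = driverD V (ψ t) w := by
  have hshift : Tendsto (shiftSeg (ψ t) w) (𝓝[>] 0) (𝓝 (ψ t)) := by
    simpa [shiftSeg_zero] using
      ((continuous_shiftSeg (ψ t) w).tendsto 0).mono_left nhdsWithin_le_nhds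
  have hψt : Tendsto (fun h => ψ (t + h)) (𝓝[>] 0) (𝓝 (ψ t)) := by
    simpa using hshift.add (hψ.trans_tendsto (tendsto_id.mono_left nhdsWithin_le_nhds))
  have hV' := ((hV.isBigO_sub hψt hshift).trans_isLittleO hψ).tendsto_div_nhds_zero
  rw [diniD, driverD]
  refine Eq.trans ?_ (EReal.limsup_add_of_tendsto_zero
    (by simpa using (continuous_coe_real_ereal.tendsto 0).comp hV'))
  congr 1
  funext h
  simp only [Pi.add_apply, Function.comp_apply, ← EReal.coe_add]
  congr 1
  ring

end History

namespace IsSolution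

variable {Δ : ℝ≥0} {n m : ℕ} {f : Hist Δ n → Vec m → Vec n} {u : ℝ → Vec m} {x₀ : Hist Δ n}
  {tmax : EReal} {x : ℝ → Vec n}

theorem sub_eq_integral (hsol : IsSolution Δ f u x₀ tmax x) {a b : ℝ} (ha : 0 ≤ a) (hab : a ≤ b)
    (hb : (b : EReal) < tmax) : x b - x a = ∫ s in a..b, f (seg Δ x s) (u s) := by
  have ha' : (a : EReal) < tmax := (EReal.coe_le_coe_iff.2 hab).trans_lt hb
  rw [hsol.integral_eq b (ha.trans hab) hb, hsol.integral_eq a ha ha', add_sub_add_left_eq_sub,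
    intervalIntegral.integral_interval_sub_left (hsol.integrable b (ha.trans hab) hb)
      (hsol.integrable a ha ha')]

theorem norm_seg_add_sub_shiftSeg_le (hsol : IsSolution Δ f u x₀ tmax x) {t h : ℝ} (w : Vec n)
    (ht : 0 ≤ t) (hh : 0 ≤ h) (hth : ((t + h : ℝ) : EReal) < tmax) :
    ‖seg Δ x (t + h) - shiftSeg (seg Δ x t) w h‖
      ≤ ∫ s in t..t + h, ‖f (seg Δ x s) (u s) - w‖ := by
  have hlt : ∀ s ≤ t + h, (s : EReal) < tmax := fun s hs =>
    (EReal.coe_le_coe_iff.2 hs).trans_lt hth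
  refine _root_.norm_seg_add_sub_shiftSeg_le w hh
    (hsol.cont.mono fun s hs => ⟨by linarith [hs.1], hlt s hs.2⟩) ?_
    fun b hb => hsol.sub_eq_integral ht hb.1 (hlt b hb.2)
  refine (hsol.integrable (t + h) (by linarith) hth).mono_set ?_
  rw [uIcc_of_le (by linarith), uIcc_of_le (by linarith)]
  exact Icc_subset_Icc ht le_rfl

end IsSolution

theorem dini_eq_driver_ae_general
    (Δ : ℝ≥0) (n m : ℕ) (f : Hist Δ n → Vec m → Vec n)
    (V : Hist Δ n → ℝ) (hVlip : LocallyLipV V)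
    (x₀ : Hist Δ n) (u : ℝ → Vec m)
    (tmax : EReal) (x : ℝ → Vec n) (hx : IsMaxSolution Δ f u x₀ tmax x) :
    ∀ᵐ (t : ℝ) ∂(volume : Measure ℝ), 0 ≤ t → (t : EReal) < tmax →
      diniD (fun s => V (seg Δ x s)) t
        = driverD V (seg Δ x t) (f (seg Δ x t) (u t)) := by
  have hsol := hx.1
  refine (ae_lt_imp_of_forall_coe_lt fun T hT => ?_).mono fun _ => Imp.swap.1
  rcases lt_or_ge T 0 with hT0 | hT0
  · exact .of_forall fun t htT h0 => absurd (h0.trans_lt htT) hT0.not_gt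
  have hg : IntegrableOn (fun s => f (seg Δ x s) (u s)) (Icc 0 T) :=
    (intervalIntegrable_iff_integrableOn_Icc_of_le hT0).1 (hsol.integrable T hT0 hT)
  filter_upwards [hg.ae_isLittleO_intervalIntegral_norm_sub] with t ht htT h0
  refine diniD_eq_driverD_of_isLittleO hVlip ((Asymptotics.IsBigO.of_bound' ?_).trans_isLittleO
    (ht ⟨h0, htT⟩))
  filter_upwards [Ioc_mem_nhdsGT (sub_pos.2 htT)] with h hh
  refine (hsol.norm_seg_add_sub_shiftSeg_le _ h0 hh.1.le ?_).trans (Real.le_norm_self _)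
  exact (EReal.coe_le_coe_iff.2 (by linarith [hh.2])).trans_lt hT

/-- Along the maximal solution, the upper right Dini derivative of
`ν(t) = V(x_t)` coincides almost everywhere with Driver's derivative
`D⁺V(x_t, f(x_t, u(t)))`. -/
theorem dini_eq_driver_ae
    (Δ : ℝ≥0) (n m : ℕ) (f : Hist Δ n → Vec m → Vec n)
    (hf : LipOnBounded f) (hf0 : f 0 0 = 0)
    (V : Hist Δ n → ℝ) (hVnonneg : ∀ φ, 0 ≤ V φ) (hVlip : LocallyLipV V)
    (x₀ : Hist Δ n) (u : ℝ → Vec m) (hu : IsInput u)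
    (tmax : EReal) (x : ℝ → Vec n) (hx : IsMaxSolution Δ f u x₀ tmax x) :
    ∀ᵐ (t : ℝ) ∂(volume : Measure ℝ), 0 ≤ t → (t : EReal) < tmax →
      diniD (fun s => V (seg Δ x s)) t
        = driverD V (seg Δ x t) (f (seg Δ x t) (u t)) :=
  dini_eq_driver_ae_general Δ n m f V hVlip x₀ u tmax x hx
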